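/- arXiv:0904.2061 — 2 statements merged into one kernel-verified Lean document; each statement's English description precedes it below -/
import Mathlib

section
/- Every instance of selfish bin covering admits an FNE(III) partition π with p(π) = OPT; that is, the price of stability with respect to FNE(III) is 1. -/
open Finset

/-- Total size of the items in a bin. -/
def binSize {n : ℕ} (a : Fin n → ℕ) (B : Finset (Fin n)) : ℕ := ∑ j ∈ B, a j

/-- The social welfare of a partition: the number of covered bins. -/
def welfare {n : ℕ} (a : Fin n → ℕ) (b : ℕ)
    (π : Finpartition (univ : Finset (Fin n))) : ℕ :=
  (π.parts.filter fun B => b ≤ binSize a B).card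

/-- The payoff of item `j` when it lies in bin `B`. -/
def payoffIn {n : ℕ} (a : Fin n → ℕ) (b : ℕ) (j : Fin n) (B : Finset (Fin n)) : ℚ :=
  if b ≤ binSize a B then (a j : ℚ) / (binSize a B : ℚ) else 0

/-- Nash equilibrium. -/
def IsNE {n : ℕ} (a : Fin n → ℕ) (b : ℕ)
    (π : Finpartition (univ : Finset (Fin n))) : Prop :=
  (∀ j : Fin n, ∀ B ∈ π.parts, j ∉ B →
      payoffIn a b j (insert j B) ≤ payoffIn a b j (π.part j)) ∧
  ∀ j : Fin n, payoffIn a b j {j} ≤ payoffIn a b j (π.part j)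

/-- A partition is reasonable if at most one bin is uncovered. -/
def Reasonable {n : ℕ} (a : Fin n → ℕ) (b : ℕ)
    (π : Finpartition (univ : Finset (Fin n))) : Prop :=
  (π.parts.filter fun B => binSize a B < b).card ≤ 1

/-- A bin is minimal covered if it is covered and removing any member uncovers it. -/
def MinimalCovered {n : ℕ} (a : Fin n → ℕ) (b : ℕ) (B : Finset (Fin n)) : Prop :=
  b ≤ binSize a B ∧ ∀ j ∈ B, binSize a (B.erase j) < b

/-- A partition is rational if it is reasonable and every covered bin is minimal covered. -/
def RationalPartition {n : ℕ} (a : Fin n → ℕ) (b : ℕ)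
    (π : Finpartition (univ : Finset (Fin n))) : Prop :=
  Reasonable a b π ∧ ∀ B ∈ π.parts, b ≤ binSize a B → MinimalCovered a b B

/-- `B_m(π)`: the unique uncovered bin of a (rational) partition if one exists, `∅` otherwise. -/
def uncoveredBin {n : ℕ} (a : Fin n → ℕ) (b : ℕ)
    (π : Finpartition (univ : Finset (Fin n))) : Finset (Fin n) :=
  (π.parts.filter fun B => binSize a B < b).sup id

/-- `δ(B) = s(B)` if `B` is covered, `+∞` otherwise. -/
def delta {n : ℕ} (a : Fin n → ℕ) (b : ℕ) (B : Finset (Fin n)) : ℕ∞ :=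
  if b ≤ binSize a B then (binSize a B : ℕ∞) else ⊤

/-- Fireable Nash equilibrium of type (I). -/
def IsFNE1 {n : ℕ} (a : Fin n → ℕ) (b : ℕ)
    (π : Finpartition (univ : Finset (Fin n))) : Prop :=
  RationalPartition a b π ∧
  ¬ ∃ j : Fin n, b ≤ binSize a (π.part j) ∧
      MinimalCovered a b (insert j (uncoveredBin a b π)) ∧
      binSize a (uncoveredBin a b π) + a j < binSize a (π.part j)

/-- Fireable Nash equilibrium of type (II). -/
def IsFNE2 {n : ℕ} (a : Fin n → ℕ) (b : ℕ)
    (π : Finpartition (univ : Finset (Fin n))) : Prop :=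
  RationalPartition a b π ∧
  ¬ ∃ (j : Fin n) (E : Finset (Fin n)), b ≤ binSize a (π.part j) ∧
      E ⊆ uncoveredBin a b π ∧
      MinimalCovered a b (insert j (uncoveredBin a b π \ E)) ∧
      binSize a (uncoveredBin a b π \ E) + a j < binSize a (π.part j)

/-- Fireable Nash equilibrium of type (III). -/
def IsFNE3 {n : ℕ} (a : Fin n → ℕ) (b : ℕ)
    (π : Finpartition (univ : Finset (Fin n))) : Prop :=
  RationalPartition a b π ∧
  ¬ ∃ (j : Fin n) (Bi E : Finset (Fin n)), Bi ∈ π.parts ∧ j ∉ Bi ∧ E ⊆ Bi ∧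
      MinimalCovered a b (insert j (Bi \ E)) ∧
      ((binSize a (Bi \ E) + a j : ℕ) : ℕ∞) < min (delta a b Bi) (delta a b (π.part j))

/-- Modified strong Nash equilibrium. -/
def IsMSNE {n : ℕ} (a : Fin n → ℕ) (b : ℕ)
    (π : Finpartition (univ : Finset (Fin n))) : Prop :=
  RationalPartition a b π ∧
  ¬ ∃ (Bi E : Finset (Fin n)), Bi ∈ π.parts ∧ b ≤ binSize a Bi ∧ E ⊆ Bi ∧
      binSize a (uncoveredBin a b π) < binSize a (Bi \ E) ∧
      MinimalCovered a b (uncoveredBin a b π ∪ E)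

/-- Strong Nash equilibrium. -/
def IsSNE {n : ℕ} (a : Fin n → ℕ) (b : ℕ)
    (π : Finpartition (univ : Finset (Fin n))) : Prop :=
  ¬ ∃ B : Finset (Fin n), b ≤ binSize a B ∧
      ∀ j ∈ B, binSize a (π.part j) < b ∨ binSize a B < binSize a (π.part j)

/-- `F` is a minimum subset w.r.t. `(E, b)`. -/
def IsMinSubset {n : ℕ} (a : Fin n → ℕ) (b : ℕ) (F E : Finset (Fin n)) : Prop :=
  F ⊆ E ∧ b ≤ binSize a F ∧ ∀ G ⊆ E, b ≤ binSize a G → binSize a F ≤ binSize a G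

/-!
Choose a partition maximising, lexicographically, the number of covered bins, then the total
size of the uncovered bins, then the sum of the squared bin sizes. The objective is a sum of
per-bin scores, so it can be compared locally whenever a few bins are replaced by others with
the same union. Merging two uncovered bins, splitting a covered bin that is not minimal into a
smaller covered bin and an uncovered singleton, and carrying out an FNE(III) deviation would all
strictly increase it; hence the maximiser is rational and an FNE(III), and its first coordinate
shows that it attains `OPT`.
-/

namespace Finpartition

variable {α : Type*} [DistribLattice α] [OrderBot α] [DecidableEq α] {a : α}
  (P : Finpartition a) {R T : Finset α}

theorem disjoint_of_mem_sdiff_of_le_sup (hR : R ⊆ P.parts) {p t : α} (hp : p ∈ P.parts \ R)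
    (ht : t ≤ R.sup id) : Disjoint p t := by
  obtain ⟨hpP, hpR⟩ := mem_sdiff.mp hp
  refine Disjoint.mono_right ht (Finset.disjoint_sup_right.mpr fun r hr => ?_)
  exact P.disjoint hpP (hR hr) (ne_of_mem_of_not_mem hr hpR).symm

def replace (hR : R ⊆ P.parts) (hT : (T : Set α).PairwiseDisjoint id)
    (hsup : T.sup id = R.sup id) : Finpartition a :=
  ofErase (P.parts \ R ∪ T)
    (supIndep_iff_pairwiseDisjoint.mpr <| coe_union (P.parts \ R) T ▸
      (supIndep_iff_pairwiseDisjoint.mp (P.supIndep.subset sdiff_subset)).union hT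
        fun _ hp t ht _ => P.disjoint_of_mem_sdiff_of_le_sup hR hp (hsup ▸ le_sup (f := id) ht))
    (by rw [sup_union, hsup, ← sup_union, sdiff_union_of_subset hR, P.sup_parts])

theorem sum_replace_add (hR : R ⊆ P.parts) (hT : (T : Set α).PairwiseDisjoint id)
    (hsup : T.sup id = R.sup id) {M : Type*} [AddCommMonoid M] (f : α → M) (hf : f ⊥ = 0) :
    ∑ x ∈ (P.replace hR hT hsup).parts, f x + ∑ x ∈ R, f x
      = ∑ x ∈ P.parts, f x + ∑ x ∈ T, f x := by
  have hdisj : Disjoint (P.parts \ R) T := disjoint_left.mpr fun t hp ht =>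
    P.ne_bot (mem_sdiff.mp hp).1 <| disjoint_self.mp <|
      P.disjoint_of_mem_sdiff_of_le_sup hR hp (hsup ▸ le_sup (f := id) ht)
  rw [replace, ofErase_parts, sum_erase _ hf, sum_union hdisj, ← sum_sdiff hR (f := f),
    add_right_comm]

end Finpartition

namespace Finset

variable {α : Type*} [DecidableEq α] {s t E : Finset α} {j : α}

theorem insert_sdiff_union_union_erase (hE : E ⊆ s) (hj : j ∈ t) :
    insert j (s \ E) ∪ (E ∪ t.erase j) = s ∪ t := by
  grind

theorem disjoint_insert_sdiff_union_erase (hst : Disjoint s t) (hE : E ⊆ s) (hj : j ∈ t) :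
    Disjoint (insert j (s \ E)) (E ∪ t.erase j) := by
  rw [disjoint_left] at hst ⊢
  grind

theorem pairwiseDisjoint_coe_pair {β : Type*} [PartialOrder β] [OrderBot β] [DecidableEq β]
    {x y : β} (h : Disjoint x y) : ((({x, y} : Finset β)) : Set β).PairwiseDisjoint id := by
  rw [coe_pair]
  exact Set.pairwise_pair.mpr fun _ => ⟨h, h.symm⟩

end Finset

def sizeScore (b s : ℕ) : ℕ ×ₗ ℕ ×ₗ ℕ :=
  if b ≤ s then toLex (1, toLex (0, s ^ 2)) else toLex (0, toLex (s, s ^ 2))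

theorem sizeScore_zero {b : ℕ} (hb : 0 < b) : sizeScore b 0 = 0 := by
  simp [sizeScore, hb.ne']

theorem sizeScore_add_lt_of_merge {b x y : ℕ} (hx : x < b) (hy : y < b) (hx0 : 0 < x)
    (hy0 : 0 < y) : sizeScore b x + sizeScore b y < sizeScore b (x + y) := by
  unfold sizeScore
  rw [if_neg (by omega), if_neg (by omega)]
  split_ifs
  · simp [← toLex_add, Prod.Lex.toLex_lt_toLex]
  · simp only [← toLex_add, Prod.mk_add_mk, add_zero, Prod.Lex.toLex_lt_toLex,
      lt_self_iff_false, true_and, false_or]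
    nlinarith

theorem sizeScore_lt_add_of_split {b x y : ℕ} (hx : b ≤ x) (hy0 : 0 < y) (hy : y < b) :
    sizeScore b (x + y) < sizeScore b x + sizeScore b y := by
  simp [sizeScore, hx, hy.not_ge, le_add_right hx, ← toLex_add, Prod.Lex.toLex_lt_toLex, hy0]

theorem sizeScore_add_lt_of_exchange {b u v x y : ℕ} (hu : b ≤ u) (hsum : u + v = x + y)
    (hx : b ≤ x → u < x) (hy : b ≤ y → u < y) (hxy : b ≤ x ∨ b ≤ y) :
    sizeScore b x + sizeScore b y < sizeScore b u + sizeScore b v := by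
  unfold sizeScore
  rw [if_pos hu]
  split_ifs with hbx hby hbv <;>
    simp only [← toLex_add, Prod.mk_add_mk, Prod.Lex.toLex_lt_toLex, add_zero, zero_add,
      lt_self_iff_false, true_and, false_or, true_or, Nat.reduceAdd, Nat.one_lt_ofNat] <;>
    first | (exfalso; omega) | (left; omega) | skip
  -- only the case of two covered bins is left: the sum of squares grows by `2 (x - u) (y - u)`
  have hux := hx hbx
  have huy := hy hby
  nlinarith [mul_pos (Nat.sub_pos_of_lt hux) (Nat.sub_pos_of_lt huy)]

section SelfishBinCovering

variable {n : ℕ} {a : Fin n → ℕ} {b : ℕ}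

variable (a b) in
def potential (π : Finpartition (univ : Finset (Fin n))) : ℕ ×ₗ ℕ ×ₗ ℕ :=
  ∑ B ∈ π.parts, sizeScore b (binSize a B)

theorem welfare_eq_fst_potential (π : Finpartition (univ : Finset (Fin n))) :
    welfare a b π = (ofLex (potential a b π)).1 := by
  change _ = (ofLexAddEquiv _ (∑ B ∈ π.parts, sizeScore b (binSize a B))).1
  rw [map_sum, Prod.fst_sum, welfare, card_filter]
  refine sum_congr rfl fun B _ => ?_
  unfold sizeScore
  split_ifs <;> rfl

theorem welfare_le_of_potential_le {π σ : Finpartition (univ : Finset (Fin n))}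
    (h : potential a b σ ≤ potential a b π) : welfare a b σ ≤ welfare a b π := by
  simpa only [welfare_eq_fst_potential] using Prod.Lex.monotone_fst _ _ h

theorem binSize_pos (ha : ∀ j, 0 < a j) {B : Finset (Fin n)} (hB : B.Nonempty) :
    0 < binSize a B :=
  sum_pos (fun j _ => ha j) hB

theorem binSize_union {B C : Finset (Fin n)} (h : Disjoint B C) :
    binSize a (B ∪ C) = binSize a B + binSize a C :=
  sum_union h

theorem sum_sizeScore_le_of_potential_max {π : Finpartition (univ : Finset (Fin n))}
    (hπ : ∀ σ, potential a b σ ≤ potential a b π) (hb : 0 < b) {R T : Finset (Finset (Fin n))}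
    (hR : R ⊆ π.parts) (hT : (T : Set (Finset (Fin n))).PairwiseDisjoint id)
    (hsup : T.sup id = R.sup id) :
    ∑ B ∈ T, sizeScore b (binSize a B) ≤ ∑ B ∈ R, sizeScore b (binSize a B) := by
  by_contra! hlt
  have hsum := π.sum_replace_add hR hT hsup (fun B => sizeScore b (binSize a B))
    (by simpa [binSize] using sizeScore_zero hb)
  refine lt_irrefl (potential a b π + ∑ B ∈ R, sizeScore b (binSize a B)) ?_
  calc potential a b π + ∑ B ∈ R, sizeScore b (binSize a B)
      < potential a b π + ∑ B ∈ T, sizeScore b (binSize a B) := by gcongr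
    _ = potential a b (π.replace hR hT hsup) + ∑ B ∈ R, sizeScore b (binSize a B) := hsum.symm
    _ ≤ potential a b π + ∑ B ∈ R, sizeScore b (binSize a B) := by gcongr; exact hπ _

theorem covered_or_covered_of_reasonable {π : Finpartition (univ : Finset (Fin n))}
    (h : Reasonable a b π) {X Y : Finset (Fin n)} (hX : X ∈ π.parts) (hY : Y ∈ π.parts)
    (hXY : X ≠ Y) : b ≤ binSize a X ∨ b ≤ binSize a Y := by
  by_contra! hc
  exact h.not_gt <| one_lt_card.mpr
    ⟨X, mem_filter.mpr ⟨hX, hc.1⟩, Y, mem_filter.mpr ⟨hY, hc.2⟩, hXY⟩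

theorem reasonable_of_potential_max (ha : ∀ j, 0 < a j)
    {π : Finpartition (univ : Finset (Fin n))} (hπ : ∀ σ, potential a b σ ≤ potential a b π) :
    Reasonable a b π := by
  unfold Reasonable
  by_contra! h
  obtain ⟨X, hX, Y, hY, hXY⟩ := one_lt_card.mp h
  rw [mem_filter] at hX hY
  have hle := sum_sizeScore_le_of_potential_max hπ (hX.2.trans_le' (Nat.zero_le _))
    (R := {X, Y}) (T := {X ∪ Y}) (insert_subset hX.1 (singleton_subset_iff.mpr hY.1))
    (by simp) (by simp)
  have hdisj : Disjoint X Y := π.disjoint hX.1 hY.1 hXY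
  rw [sum_pair hXY, sum_singleton, binSize_union hdisj] at hle
  exact hle.not_gt <| sizeScore_add_lt_of_merge hX.2 hY.2
    (binSize_pos ha (π.nonempty_of_mem_parts hX.1)) (binSize_pos ha (π.nonempty_of_mem_parts hY.1))

theorem minimalCovered_of_potential_max (ha : ∀ j, 0 < a j) (hab : ∀ j, a j < b)
    {π : Finpartition (univ : Finset (Fin n))} (hπ : ∀ σ, potential a b σ ≤ potential a b π)
    {B : Finset (Fin n)} (hB : B ∈ π.parts) (hcov : b ≤ binSize a B) : MinimalCovered a b B := by
  refine ⟨hcov, fun j hj => ?_⟩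
  by_contra! hcov'
  have hdisj : Disjoint (B.erase j) {j} := disjoint_singleton_right.mpr (notMem_erase j B)
  have hne : B.erase j ≠ {j} := fun h => by simp [h] at hdisj
  have hle := sum_sizeScore_le_of_potential_max hπ ((ha j).trans (hab j))
    (R := {B}) (T := {B.erase j, {j}}) (singleton_subset_iff.mpr hB)
    (pairwiseDisjoint_coe_pair hdisj) (by simp [insert_erase hj])
  have hsplit : binSize a B = binSize a (B.erase j) + a j := (sum_erase_add B a hj).symm
  rw [sum_singleton, sum_pair hne, hsplit, binSize, binSize, sum_singleton] at hle
  exact hle.not_gt (sizeScore_lt_add_of_split hcov' (ha j) (hab j))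

theorem coe_lt_delta_iff {m : ℕ} {B : Finset (Fin n)} :
    (m : ℕ∞) < delta a b B ↔ (b ≤ binSize a B → m < binSize a B) := by
  unfold delta
  split_ifs with h <;> simp [h]

theorem isFNE3_of_potential_max (ha : ∀ j, 0 < a j) (hab : ∀ j, a j < b)
    {π : Finpartition (univ : Finset (Fin n))} (hπ : ∀ σ, potential a b σ ≤ potential a b π) :
    IsFNE3 a b π := by
  have hreas := reasonable_of_potential_max ha hπ
  refine ⟨⟨hreas, fun B hB => minimalCovered_of_potential_max ha hab hπ hB⟩, ?_⟩
  rintro ⟨j, Bi, E, hBi, hjBi, hEBi, hN, hlt⟩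
  set Bj := π.part j
  have hBj : Bj ∈ π.parts := π.part_mem.mpr (mem_univ j)
  have hjBj : j ∈ Bj := π.mem_part_self.mpr (mem_univ j)
  have hBiBj : Bi ≠ Bj := fun h => hjBi (h ▸ hjBj)
  have hdisj : Disjoint Bi Bj := π.disjoint hBi hBj hBiBj
  have hNP := disjoint_insert_sdiff_union_erase hdisj hEBi hjBj
  have hunion := insert_sdiff_union_union_erase hEBi hjBj
  have hNsize : binSize a (insert j (Bi \ E)) = binSize a (Bi \ E) + a j := by
    rw [binSize, sum_insert fun h => hjBi (mem_sdiff.mp h).1, add_comm]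
    rfl
  rw [lt_min_iff, coe_lt_delta_iff, coe_lt_delta_iff, ← hNsize] at hlt
  have hle := sum_sizeScore_le_of_potential_max hπ ((ha j).trans (hab j))
    (R := {Bi, Bj}) (T := {insert j (Bi \ E), E ∪ Bj.erase j})
    (insert_subset hBi (singleton_subset_iff.mpr hBj)) (pairwiseDisjoint_coe_pair hNP)
    (by simpa using hunion)
  rw [sum_pair hBiBj, sum_pair (hNP.ne (insert_nonempty j _).ne_empty)] at hle
  refine hle.not_gt (sizeScore_add_lt_of_exchange hN.1 ?_ hlt.1 hlt.2
    (covered_or_covered_of_reasonable hreas hBi hBj hBiBj))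
  rw [← binSize_union hNP, hunion, binSize_union hdisj]

end SelfishBinCovering

theorem stmt8_general (n : ℕ) (a : Fin n → ℕ) (b : ℕ)
    (ha : ∀ j, 0 < a j) (hab : ∀ j, a j < b) :
    ∃ π : Finpartition (univ : Finset (Fin n)),
      IsFNE3 a b π ∧ ∀ σ : Finpartition (univ : Finset (Fin n)),
        welfare a b σ ≤ welfare a b π := by
  obtain ⟨π, hπ⟩ := Finite.exists_max (potential a b)
  exact ⟨π, isFNE3_of_potential_max ha hab hπ, fun σ => welfare_le_of_potential_le (hπ σ)⟩

/-- every instance admits an FNE(III) whose welfare equals `OPT`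
(price of stability w.r.t. FNE(III) is 1). -/
theorem stmt8 (n : ℕ) (hn : 1 ≤ n) (a : Fin n → ℕ) (b : ℕ)
    (ha : ∀ j, 0 < a j) (hab : ∀ j, a j < b) :
    ∃ π : Finpartition (univ : Finset (Fin n)),
      IsFNE3 a b π ∧ ∀ σ : Finpartition (univ : Finset (Fin n)),
        welfare a b σ ≤ welfare a b π :=
  stmt8_general n a b ha hab
end

section
/- Every reasonable partition that is a strong Nash equilibrium (SNE) is an FNE(III). -/
open Finset

/-!
A strong Nash equilibrium admits no coalition `B` with `s(B) ≥ b` in which every member `k`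
strictly improves, i.e. `s(B) < δ(B_{k,π})`. A covered bin that is not minimal covered loses
an item and leaves a smaller covered coalition behind; an FNE(III) deviation `(j, B_i, E)` is
itself such a coalition `{j} ∪ (B_i ∖ E)`, since the members of `B_i ∖ E` compare with
`δ(B_i)` and `j` with `δ(B_{j,π})`.
-/

section SelfishBinCovering

variable {n : ℕ} {a : Fin n → ℕ} {b : ℕ} {π : Finpartition (univ : Finset (Fin n))}

lemma binSize_insert {j : Fin n} {B : Finset (Fin n)} (hj : j ∉ B) :
    binSize a (insert j B) = binSize a B + a j := by
  rw [binSize, sum_insert hj, add_comm, binSize]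

lemma binSize_erase_add {j : Fin n} {B : Finset (Fin n)} (hj : j ∈ B) :
    binSize a (B.erase j) + a j = binSize a B :=
  sum_erase_add _ _ hj

lemma lt_delta_iff {x : ℕ} {B : Finset (Fin n)} :
    (x : ℕ∞) < delta a b B ↔ binSize a B < b ∨ x < binSize a B := by
  unfold delta
  split_ifs with hcov
  · simp only [Nat.cast_lt]
    omega
  · simp only [ENat.natCast_lt_top, true_iff]
    omega

lemma IsSNE.false_of_forall_lt_delta (hsne : IsSNE a b π) {B : Finset (Fin n)}
    (hcov : b ≤ binSize a B) (himp : ∀ k ∈ B, (binSize a B : ℕ∞) < delta a b (π.part k)) :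
    False :=
  hsne ⟨B, hcov, fun k hk => lt_delta_iff.mp (himp k hk)⟩

lemma IsSNE.minimalCovered (ha : ∀ j, 0 < a j) (hsne : IsSNE a b π) {B : Finset (Fin n)}
    (hB : B ∈ π.parts) (hcov : b ≤ binSize a B) : MinimalCovered a b B := by
  refine ⟨hcov, fun j hj => ?_⟩
  by_contra! hcov'
  refine hsne.false_of_forall_lt_delta hcov' fun k hk => ?_
  rw [π.part_eq_of_mem hB (mem_of_mem_erase hk), lt_delta_iff]
  have := binSize_erase_add (a := a) hj
  have := ha j
  omega

lemma IsSNE.rationalPartition (ha : ∀ j, 0 < a j) (hres : Reasonable a b π)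
    (hsne : IsSNE a b π) : RationalPartition a b π :=
  ⟨hres, fun _ hB hcov => hsne.minimalCovered ha hB hcov⟩

lemma IsSNE.not_exists_fne3_deviation (hsne : IsSNE a b π) :
    ¬ ∃ (j : Fin n) (Bi E : Finset (Fin n)), Bi ∈ π.parts ∧ j ∉ Bi ∧ E ⊆ Bi ∧
      MinimalCovered a b (insert j (Bi \ E)) ∧
      ((binSize a (Bi \ E) + a j : ℕ) : ℕ∞) < min (delta a b Bi) (delta a b (π.part j)) := by
  rintro ⟨j, Bi, E, hBi, hjBi, -, ⟨hcov, -⟩, hlt⟩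
  rw [← binSize_insert fun h => hjBi (mem_sdiff.mp h).1, lt_min_iff] at hlt
  refine hsne.false_of_forall_lt_delta hcov fun k hk => ?_
  rcases mem_insert.mp hk with rfl | hk
  · exact hlt.2
  · rw [π.part_eq_of_mem hBi (mem_sdiff.mp hk).1]
    exact hlt.1

end SelfishBinCovering

theorem stmt13_general (n : ℕ) (a : Fin n → ℕ) (b : ℕ)
    (ha : ∀ j, 0 < a j)
    (π : Finpartition (univ : Finset (Fin n)))
    (hres : Reasonable a b π) (hsne : IsSNE a b π) :
    IsFNE3 a b π :=
  ⟨hsne.rationalPartition ha hres, hsne.not_exists_fne3_deviation⟩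

/-- every reasonable SNE is an FNE(III). -/
theorem stmt13 (n : ℕ) (hn : 1 ≤ n) (a : Fin n → ℕ) (b : ℕ)
    (ha : ∀ j, 0 < a j) (hab : ∀ j, a j < b)
    (π : Finpartition (univ : Finset (Fin n)))
    (hres : Reasonable a b π) (hsne : IsSNE a b π) :
    IsFNE3 a b π :=
  stmt13_general n a b ha π hres hsne
end
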